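/- Fix natural numbers r ≤ n. The operators K_{r0}, K_{r1}, …, K_{rr} are ℝ-linearly independent as linear maps on ℝ[x], each maps every polynomial of degree at most n to a polynomial of degree at most n − r, and every operator L[f] = Σ_{i=0}^{r} a_i(x)·f^{(i)} with polynomial coefficients that maps P_n into P_{n−r} can be written uniquely as L = Σ_{j=0}^{r} c_j · K_{rj} with constants c_0, …, c_r ∈ ℝ. Consequently, the ℝ-vector space of linear differential operators with polynomial coefficients of order at most r and deficiency at least r relative to P_n has dimension r + 1. -/

import Mathlib

open Polynomial

/-- The operator `xD : p ↦ x·p'`. -/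
noncomputable def xD : ℝ[X] →ₗ[ℝ] ℝ[X] :=
  (LinearMap.mulLeft ℝ (X : ℝ[X])).comp (Polynomial.derivative : ℝ[X] →ₗ[ℝ] ℝ[X])

/-- The Pochhammer operator `(a − xD)_k = (a − xD)∘((a−1) − xD)∘⋯∘((a−k+1) − xD)`,
the identity when `k = 0`. -/
noncomputable def pochOp (a : ℤ) : ℕ → (ℝ[X] →ₗ[ℝ] ℝ[X])
  | 0 => LinearMap.id
  | k + 1 => ((a : ℝ) • (LinearMap.id : ℝ[X] →ₗ[ℝ] ℝ[X]) - xD).comp (pochOp (a - 1) k)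

/-- Differentiation as an endomorphism of `ℝ[X]`. -/
noncomputable def Dlm : Module.End ℝ ℝ[X] := (Polynomial.derivative : ℝ[X] →ₗ[ℝ] ℝ[X])

/-- The maximal deficiency operator `K_{rj} = (1/(r−j)!)·(n−j−xD)_{r−j} ∘ D^j`. -/
noncomputable def Kop (n r j : ℕ) : ℝ[X] →ₗ[ℝ] ℝ[X] :=
  (((r - j).factorial : ℝ))⁻¹ • ((pochOp ((n : ℤ) - j) (r - j)).comp (Dlm ^ j))

lemma xD_apply (p : ℝ[X]) : xD p = X * derivative p := rfl

lemma Dlm_pow_apply (j : ℕ) (p : ℝ[X]) : (Dlm ^ j) p = derivative^[j] p := by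
  rw [Dlm, Module.End.pow_apply]

lemma pochOp_X_pow (k : ℕ) : ∀ (a : ℤ) (d : ℕ),
    pochOp a k (X ^ d : ℝ[X]) = (∏ i ∈ Finset.range k, ((a : ℝ) - i - d)) • X ^ d := by
  induction k with
  | zero => intro a d; simp [pochOp]
  | succ k ih =>
    intro a d
    rw [pochOp, LinearMap.comp_apply, ih (a - 1) d]
    rw [map_smul]
    have hxD : xD (X ^ d : ℝ[X]) = (d : ℝ) • X ^ d := by
      rw [xD_apply, derivative_X_pow, smul_eq_C_mul]
      cases d with
      | zero => simp
      | succ d => rw [pow_succ]; push_cast; ring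
    have : (((a : ℝ) • (LinearMap.id : ℝ[X] →ₗ[ℝ] ℝ[X]) - xD)) (X ^ d : ℝ[X])
        = ((a : ℝ) - d) • X ^ d := by
      simp [hxD, sub_smul]
    rw [this, smul_smul, Finset.prod_range_succ']
    congr 1
    congr 1
    · apply Finset.prod_congr rfl
      intro x _
      push_cast
      ring
    · push_cast; ring

noncomputable def gam : ℤ → ℕ → ℕ → ℝ
  | _, 0, 0 => 1
  | _, 0, _+1 => 0
  | a, k+1, 0 => (a : ℝ) * gam (a-1) k 0
  | a, k+1, i+1 => ((a : ℝ) - (i+1)) * gam (a-1) k (i+1) - gam (a-1) k i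

lemma gam_eq_zero_of_gt : ∀ (k : ℕ) (a : ℤ) (i : ℕ), k < i → gam a k i = 0 := by
  intro k
  induction k with
  | zero => intro a i hi; match i, hi with | i+1, _ => rfl
  | succ k ih =>
    intro a i hi
    match i, hi with
    | i+1, hi =>
      show ((a : ℝ) - (i+1)) * gam (a-1) k (i+1) - gam (a-1) k i = 0
      rw [ih (a-1) (i+1) (by omega), ih (a-1) i (by omega)]
      ring

lemma gam_zero_pos : ∀ (k : ℕ) (a : ℤ), (k : ℤ) ≤ a → 0 < gam a k 0 := by
  intro k
  induction k with
  | zero => intro a _; show (0:ℝ) < 1; norm_num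
  | succ k ih =>
    intro a ha
    show 0 < (a : ℝ) * gam (a-1) k 0
    have h1 : (0:ℝ) < (a:ℝ) := by
      have : (0:ℤ) < a := by omega
      exact_mod_cast this
    exact mul_pos h1 (ih (a-1) (by omega))

lemma pochOp_structure (k : ℕ) : ∀ (a : ℤ) (j : ℕ) (p : ℝ[X]),
    pochOp a k (derivative^[j] p) =
      ∑ i ∈ Finset.range (k+1), gam a k i • ((X:ℝ[X]) ^ i * derivative^[j+i] p) := by
  induction k with
  | zero =>
    intro a j p
    show LinearMap.id (derivative^[j] p) = _
    simp [gam]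
  | succ k ih =>
    intro a j p
    rw [pochOp, LinearMap.comp_apply, ih (a-1) j p, map_sum]
    have hterm : ∀ i : ℕ,
        (((a:ℝ) • (LinearMap.id : ℝ[X] →ₗ[ℝ] ℝ[X]) - xD))
          (gam (a-1) k i • ((X:ℝ[X]) ^ i * derivative^[j+i] p))
        = gam (a-1) k i • (((a:ℝ) - i) • ((X:ℝ[X]) ^ i * derivative^[j+i] p)
            - (X:ℝ[X]) ^ (i+1) * derivative^[j+i+1] p) := by
      intro i
      rw [map_smul]
      congr 1
      rw [LinearMap.sub_apply, LinearMap.smul_apply, LinearMap.id_apply]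
      rw [xD_apply, derivative_mul, derivative_X_pow]
      have hX : (X:ℝ[X]) * (C (i:ℝ) * X ^ (i-1) * derivative^[j+i] p
          + X ^ i * derivative (derivative^[j+i] p))
          = (i:ℝ) • ((X:ℝ[X]) ^ i * derivative^[j+i] p)
            + (X:ℝ[X]) ^ (i+1) * derivative^[j+i+1] p := by
        have hD : derivative (derivative^[j+i] p) = derivative^[j+i+1] p := by
          rw [← Function.iterate_succ_apply' derivative]
        rw [hD, smul_eq_C_mul]
        cases i with
        | zero => simp [pow_succ]
        | succ i =>
          simp only [Nat.add_sub_cancel]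
          push_cast
          ring
      rw [hX, sub_add_eq_sub_sub, sub_smul]
    rw [Finset.sum_congr rfl (fun i _ => hterm i)]
    have hsplit : ∀ i : ℕ, gam (a-1) k i • (((a:ℝ) - i) • ((X:ℝ[X]) ^ i * derivative^[j+i] p)
            - (X:ℝ[X]) ^ (i+1) * derivative^[j+i+1] p)
        = (((a:ℝ) - i) * gam (a-1) k i) • ((X:ℝ[X]) ^ i * derivative^[j+i] p)
            - gam (a-1) k i • ((X:ℝ[X]) ^ (i+1) * derivative^[j+i+1] p) := by
      intro i
      rw [smul_sub, smul_smul, mul_comm]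
    rw [Finset.sum_congr rfl (fun i _ => hsplit i), Finset.sum_sub_distrib]
    -- extend first sum to range (k+2)
    have hext : ∑ i ∈ Finset.range (k+1), (((a:ℝ) - i) * gam (a-1) k i) • ((X:ℝ[X]) ^ i * derivative^[j+i] p)
        = ∑ i ∈ Finset.range (k+2), (((a:ℝ) - i) * gam (a-1) k i) • ((X:ℝ[X]) ^ i * derivative^[j+i] p) := by
      rw [Finset.sum_range_succ (n := k+1)]
      rw [gam_eq_zero_of_gt k (a-1) (k+1) (by omega)]
      simp
    rw [hext, Finset.sum_range_succ' _ (k+1), Finset.sum_range_succ' (fun i => gam a (k+1) i • ((X:ℝ[X]) ^ i * derivative^[j+i] p)) (k+1)]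
    have hsucc : ∀ i : ℕ, gam a (k+1) (i+1) = ((a : ℝ) - ((i:ℝ)+1)) * gam (a-1) k (i+1) - gam (a-1) k i := fun i => rfl
    have hG : ∀ i ∈ Finset.range (k+1), gam a (k+1) (i+1) • ((X:ℝ[X]) ^ (i+1) * derivative^[j+(i+1)] p)
        = (((a:ℝ) - ((i+1:ℕ):ℝ)) * gam (a-1) k (i+1)) • ((X:ℝ[X]) ^ (i+1) * derivative^[j+(i+1)] p)
          - gam (a-1) k i • ((X:ℝ[X]) ^ (i+1) * derivative^[j+i+1] p) := by
      intro i _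
      rw [hsucc i, sub_smul]
      push_cast
      rw [show j+(i+1) = j+i+1 from rfl]
    rw [Finset.sum_congr rfl hG, Finset.sum_sub_distrib]
    have hG0 : gam a (k+1) 0 • ((X:ℝ[X]) ^ 0 * derivative^[j+0] p)
        = (((a:ℝ) - ((0:ℕ):ℝ)) * gam (a-1) k 0) • ((X:ℝ[X]) ^ 0 * derivative^[j+0] p) := by
      show ((a:ℝ) * gam (a-1) k 0) • _ = _
      norm_num
    rw [hG0]
    abel

noncomputable def kcoef (n r j i : ℕ) : ℝ :=
  if j ≤ i ∧ i ≤ r then (((r - j).factorial : ℝ))⁻¹ * gam ((n : ℤ) - j) (r - j) (i - j) else 0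

lemma Kop_structure (n r j : ℕ) (hj : j ≤ r) (p : ℝ[X]) :
    Kop n r j p = ∑ i ∈ Finset.range (r+1),
      kcoef n r j i • ((X:ℝ[X]) ^ (i - j) * derivative^[i] p) := by
  rw [Kop, LinearMap.smul_apply, LinearMap.comp_apply, Dlm_pow_apply,
    pochOp_structure (r - j) ((n:ℤ) - j) j p, Finset.smul_sum]
  conv_rhs => rw [show r + 1 = j + (r - j + 1) by omega, Finset.sum_range_add]
  have h1 : ∀ i ∈ Finset.range j,
      kcoef n r j i • ((X:ℝ[X]) ^ (i - j) * derivative^[i] p) = 0 := by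
    intro i hi
    rw [Finset.mem_range] at hi
    rw [kcoef, if_neg (by omega)]
    simp
  rw [Finset.sum_congr rfl h1, Finset.sum_const_zero, zero_add]
  apply Finset.sum_congr rfl
  intro x hx
  rw [Finset.mem_range] at hx
  have e1 : j + x - j = x := by omega
  rw [kcoef, if_pos (by constructor <;> omega), e1, smul_smul]

lemma Kop_X_pow (n r j m : ℕ) :
    Kop n r j (X ^ m : ℝ[X]) =
      ((((r - j).factorial : ℝ))⁻¹ * (m.descFactorial j : ℝ)
        * ∏ i ∈ Finset.range (r - j), ((n:ℝ) - j - i - ((m - j : ℕ) : ℝ))) • X ^ (m - j) := by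
  rw [Kop, LinearMap.smul_apply, LinearMap.comp_apply, Dlm_pow_apply,
    iterate_derivative_X_pow_eq_smul, map_smul, pochOp_X_pow]
  rw [smul_smul, smul_smul]
  congr 1
  push_cast
  ring

lemma Kop_scalar_vanish (n r j m : ℕ) (hj : j ≤ r) (hmn : m ≤ n) (hm : n - r + j < m) :
    ((((r - j).factorial : ℝ))⁻¹ * (m.descFactorial j : ℝ)
        * ∏ i ∈ Finset.range (r - j), ((n:ℝ) - j - i - ((m - j : ℕ) : ℝ))) = 0 := by
  rcases le_or_gt j m with hjm | hjm
  · have hfac : ((n:ℝ) - j - ((n - m : ℕ):ℝ) - ((m - j : ℕ) : ℝ)) = 0 := by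
      have h1 : ((n - m : ℕ) : ℝ) = (n:ℝ) - m := by
        push_cast [Nat.cast_sub hmn]; ring
      have h2 : ((m - j : ℕ) : ℝ) = (m:ℝ) - j := by
        push_cast [Nat.cast_sub hjm]; ring
      rw [h1, h2]; ring
    rw [Finset.prod_eq_zero (Finset.mem_range.mpr (show n - m < r - j by omega)) hfac]
    ring
  · rw [Nat.descFactorial_eq_zero_iff_lt.mpr hjm]
    push_cast
    ring

lemma Kop_scalar_ne_zero (n r j : ℕ) (hj : j ≤ r) :
    ((((r - j).factorial : ℝ))⁻¹ * ((n + r).descFactorial j : ℝ)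
        * ∏ i ∈ Finset.range (r - j), ((n:ℝ) - j - i - ((n + r - j : ℕ) : ℝ))) ≠ 0 := by
  apply mul_ne_zero
  apply mul_ne_zero
  · exact inv_ne_zero (by exact_mod_cast (r - j).factorial_ne_zero)
  · have h : (n + r).descFactorial j ≠ 0 := by
      rw [Ne, Nat.descFactorial_eq_zero_iff_lt]; omega
    exact Nat.cast_ne_zero.mpr h
  · apply Finset.prod_ne_zero_iff.mpr
    intro i hi
    rw [Finset.mem_range] at hi
    have h2 : ((n + r - j : ℕ) : ℝ) = (n:ℝ) + r - j := by
      push_cast [Nat.cast_sub (show j ≤ n + r by omega)]; ring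
    rw [h2]
    intro hc
    have : (n:ℝ) - j - i - ((n:ℝ) + r - j) = -(r + i) := by ring
    rw [this] at hc
    have : ((r + i : ℕ) : ℝ) = 0 := by push_cast; linarith
    have : r + i = 0 := by exact_mod_cast this
    omega

lemma kcoef_eq_zero_left (n r j i : ℕ) (h : i < j) : kcoef n r j i = 0 := by
  rw [kcoef, if_neg (by omega)]

lemma kcoef_diag_pos (n r t : ℕ) (ht : t ≤ r) (hrn : r ≤ n) : 0 < kcoef n r t t := by
  rw [kcoef, if_pos ⟨le_refl t, ht⟩, Nat.sub_self]
  apply mul_pos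
  · exact inv_pos.mpr (by exact_mod_cast (r - t).factorial_pos)
  · apply gam_zero_pos
    omega

lemma kcoef_sum_vanish (n r : ℕ) (t m : ℕ) (ht : t ≤ r) (hm : m ≤ n) (h : n - r + t < m) :
    ∑ i ∈ Finset.range (r+1), (m.descFactorial i : ℝ) * kcoef n r t i = 0 := by
  have h1 := Kop_structure n r t ht (X ^ m)
  have h2 := Kop_X_pow n r t m
  rw [Kop_scalar_vanish n r t m ht hm h, zero_smul] at h2
  rw [h2] at h1
  have h3 := congrArg (fun q : ℝ[X] => q.coeff (m - t)) h1
  simp only [Polynomial.finset_sum_coeff] at h3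
  rw [Polynomial.coeff_zero] at h3
  rw [h3]
  apply Finset.sum_congr rfl
  intro i hi
  rw [Finset.mem_range] at hi
  rw [iterate_derivative_X_pow_eq_smul, mul_smul_comm, smul_smul, ← pow_add,
    Polynomial.coeff_smul, Polynomial.coeff_X_pow]
  rcases lt_or_ge m i with hmi | hmi
  · rw [Nat.descFactorial_eq_zero_iff_lt.mpr hmi]
    simp
  rcases lt_or_ge i t with hit | hit
  · rw [kcoef_eq_zero_left n r t i hit]
    simp
  · rw [if_pos (by omega)]
    simp [smul_eq_mul, mul_comm]

lemma vandermonde_zero (n r : ℕ) (hrn : r ≤ n) (t : ℤ) (u : ℕ → ℝ)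
    (h1 : ∀ i, i ≤ r → (i : ℤ) ≤ t → u i = 0)
    (h2 : ∀ m : ℕ, m ≤ n → ((n - r : ℕ) : ℤ) + t < (m : ℤ) →
      ∑ i ∈ Finset.range (r+1), (m.descFactorial i : ℝ) * u i = 0) :
    ∀ i, i ≤ r → u i = 0 := by
  by_cases hrt : (r : ℤ) ≤ t
  · intro i hi
    exact h1 i hi (le_trans (by exact_mod_cast hi) hrt)
  push_neg at hrt
  set q : ℝ[X] := ∑ i ∈ Finset.range (r+1), C (u i) * descPochhammer ℝ i with hqdef
  have hdeg : q.natDegree ≤ r := by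
    apply Polynomial.natDegree_sum_le_of_forall_le
    intro i hi
    rw [Finset.mem_range] at hi
    refine le_trans (Polynomial.natDegree_C_mul_le _ _) ?_
    rw [descPochhammer_natDegree]
    omega
  have heval : ∀ m : ℕ, q.eval (m : ℝ) =
      ∑ i ∈ Finset.range (r+1), (m.descFactorial i : ℝ) * u i := by
    intro m
    rw [hqdef, Polynomial.eval_finset_sum]
    apply Finset.sum_congr rfl
    intro i _
    rw [Polynomial.eval_mul, Polynomial.eval_C, descPochhammer_eval_eq_descFactorial]
    ring
  set ρ : Fin (r+1) → ℕ := fun i => if ((i : ℕ) : ℤ) ≤ t then (i : ℕ) else n - r + i with hρdef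
  have hρinj : Function.Injective ρ := by
    intro i i' hii
    rw [hρdef] at hii
    simp only at hii
    have hi := i.isLt
    have hi' := i'.isLt
    apply Fin.ext
    split_ifs at hii with ha hb hb
    · exact hii
    · exfalso; push_neg at hb; omega
    · exfalso; push_neg at ha; omega
    · omega
  have hroots : ∀ i : Fin (r+1), q.eval ((ρ i : ℕ) : ℝ) = 0 := by
    intro i
    rw [heval, hρdef]
    simp only
    have hi := i.isLt
    split_ifs with ha
    · apply Finset.sum_eq_zero
      intro i' hi'
      rw [Finset.mem_range] at hi'
      rcases le_or_gt (i' : ℕ) (i : ℕ) with hle | hlt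
      · rw [h1 i' (by omega) (le_trans (by exact_mod_cast hle) ha)]
        ring
      · rw [Nat.descFactorial_eq_zero_iff_lt.mpr hlt]
        push_cast
        ring
    · push_neg at ha
      apply h2 _ (by omega)
      push_cast [Nat.cast_sub hrn]
      omega
  have hq : q = 0 := by
    apply Polynomial.eq_zero_of_natDegree_lt_card_of_eval_eq_zero q
      (f := fun i : Fin (r+1) => ((ρ i : ℕ) : ℝ))
      (Nat.cast_injective.comp hρinj) hroots
    rw [Fintype.card_fin]
    omega
  have hcoeff : ∀ i, i ≤ r → (∀ i', i < i' → i' ≤ r → u i' = 0) → u i = 0 := by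
    intro i hi hup
    have hc : q.coeff i = 0 := by rw [hq]; simp
    rw [hqdef, Polynomial.finset_sum_coeff] at hc
    rw [Finset.sum_eq_single i] at hc
    · rw [Polynomial.coeff_C_mul] at hc
      have hmon : (descPochhammer ℝ i).coeff i = 1 := by
        have := (monic_descPochhammer ℝ i).coeff_natDegree
        rwa [descPochhammer_natDegree] at this
      rw [hmon, mul_one] at hc
      exact hc
    · intro b hb hbi
      rw [Finset.mem_range] at hb
      rw [Polynomial.coeff_C_mul]
      rcases lt_or_gt_of_ne hbi with hlt | hgt
      · rw [Polynomial.coeff_eq_zero_of_natDegree_lt (by rw [descPochhammer_natDegree]; omega)]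
        ring
      · rw [hup b hgt (by omega)]
        ring
    · intro hni
      exfalso
      exact hni (Finset.mem_range.mpr (by omega))
  have main : ∀ k i, i ≤ r → r - i ≤ k → u i = 0 := by
    intro k
    induction k with
    | zero =>
      intro i hi hk
      have : i = r := by omega
      subst this
      exact hcoeff i le_rfl (fun i' h1' h2' => by omega)
    | succ k ih =>
      intro i hi hk
      rcases le_or_gt (r - i) k with hle | hgt
      · exact ih i hi hle
      · exact hcoeff i hi (fun i' hlt hle => ih i' hle (by omega))
  intro i hi
  exact main r i hi (by omega)

lemma Kop_maps (n r j : ℕ) (hj : j ≤ r) (hrn : r ≤ n) :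
    ∀ f ∈ degreeLE ℝ (n : WithBot ℕ), Kop n r j f ∈ degreeLE ℝ ((n - r : ℕ) : WithBot ℕ) := by
  intro f hf
  have hdeg : f.natDegree < n + 1 := by
    have := Polynomial.mem_degreeLE.mp hf
    have h2 : f.natDegree ≤ n := Polynomial.natDegree_le_iff_degree_le.mpr this
    omega
  rw [Polynomial.as_sum_range' f (n+1) hdeg, map_sum]
  apply Submodule.sum_mem
  intro m hm
  rw [Finset.mem_range] at hm
  have hmono : (Polynomial.monomial m) (f.coeff m) = f.coeff m • (X ^ m : ℝ[X]) :=
    (Polynomial.smul_X_eq_monomial).symm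
  rw [hmono, map_smul]
  apply Submodule.smul_mem
  rw [Kop_X_pow]
  rcases le_or_gt m (n - r + j) with hle | hgt
  · apply Polynomial.mem_degreeLE.mpr
    refine le_trans (Polynomial.degree_smul_le _ _) ?_
    rw [Polynomial.degree_X_pow]
    exact_mod_cast (show m - j ≤ n - r by omega)
  · rw [Kop_scalar_vanish n r j m hj (by omega) hgt, zero_smul]
    exact Submodule.zero_mem _

noncomputable def wcoef (a : ℕ → ℝ[X]) (t : ℤ) (i : ℕ) : ℝ :=
  if t ≤ (i : ℤ) then (a i).coeff ((i - t).toNat) else 0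

lemma map_cond_coeff (n r : ℕ) (a : ℕ → ℝ[X])
    (H : ∀ f ∈ degreeLE ℝ (n : WithBot ℕ),
      (∑ i ∈ Finset.range (r + 1), a i * derivative^[i] f) ∈
        degreeLE ℝ ((n - r : ℕ) : WithBot ℕ)) :
    ∀ t : ℤ, ∀ m : ℕ, m ≤ n → ((n - r : ℕ) : ℤ) + t < (m : ℤ) →
      ∑ i ∈ Finset.range (r+1), (m.descFactorial i : ℝ) * wcoef a t i = 0 := by
  intro t m hm hlt
  have hXm : (X ^ m : ℝ[X]) ∈ degreeLE ℝ (n : WithBot ℕ) := by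
    apply Polynomial.mem_degreeLE.mpr
    rw [Polynomial.degree_X_pow]
    exact_mod_cast hm
  have hg := H _ hXm
  set s : ℕ := ((m : ℤ) - t).toNat with hsdef
  have hs : (s : ℤ) = (m : ℤ) - t := Int.toNat_of_nonneg (by omega)
  have hcs : (∑ i ∈ Finset.range (r + 1), a i * derivative^[i] (X ^ m : ℝ[X])).coeff s = 0 := by
    apply Polynomial.coeff_eq_zero_of_degree_lt
    refine lt_of_le_of_lt (Polynomial.mem_degreeLE.mp hg) ?_
    exact_mod_cast (show n - r < s by omega)
  rw [Polynomial.finset_sum_coeff] at hcs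
  rw [← hcs]
  apply Finset.sum_congr rfl
  intro i hi
  rw [Finset.mem_range] at hi
  rw [iterate_derivative_X_pow_eq_smul, mul_smul_comm, Polynomial.coeff_smul,
    Polynomial.coeff_mul_X_pow']
  rcases lt_or_ge m i with hmi | him
  · rw [Nat.descFactorial_eq_zero_iff_lt.mpr hmi]
    simp
  rcases le_or_gt t (i : ℤ) with hti | hti
  · rw [wcoef, if_pos hti, if_pos (by omega)]
    rw [smul_eq_mul]
    congr 2
    omega
  · rw [wcoef, if_neg (by omega), if_neg (by omega)]
    simp

lemma Kpart_coeff (n r : ℕ) (c : ℕ → ℝ) (i d : ℕ) (hi : i ≤ r) :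
    (∑ j ∈ Finset.range (r+1), C (c j * kcoef n r j i) * X ^ (i - j)).coeff d
      = if d ≤ i then c (i - d) * kcoef n r (i - d) i else 0 := by
  rw [Polynomial.finset_sum_coeff]
  have hterm : ∀ j, (C (c j * kcoef n r j i) * X ^ (i - j)).coeff d
      = (c j * kcoef n r j i) * (if d = i - j then 1 else 0) := by
    intro j
    rw [Polynomial.coeff_C_mul, Polynomial.coeff_X_pow]
  rw [Finset.sum_congr rfl (fun j _ => hterm j)]
  rcases le_or_gt d i with hd | hd
  · rw [if_pos hd, Finset.sum_eq_single (i - d)]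
    · rw [if_pos (by omega), mul_one]
    · intro j hj hji
      rw [Finset.mem_range] at hj
      rcases le_or_gt j i with hji2 | hji2
      · rw [if_neg (by omega), mul_zero]
      · rw [kcoef, if_neg (by omega)]
        ring
    · intro hni
      exact absurd (Finset.mem_range.mpr (by omega)) hni
  · rw [if_neg (by omega)]
    apply Finset.sum_eq_zero
    intro j hj
    rw [if_neg (by omega), mul_zero]

lemma exists_comb (n r : ℕ) (hrn : r ≤ n) (a : ℕ → ℝ[X])
    (H : ∀ f ∈ degreeLE ℝ (n : WithBot ℕ),
      (∑ i ∈ Finset.range (r + 1), a i * derivative^[i] f) ∈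
        degreeLE ℝ ((n - r : ℕ) : WithBot ℕ)) :
    ∃ c : ℕ → ℝ, ∀ i, i ≤ r →
      a i = ∑ j ∈ Finset.range (r+1), C (c j * kcoef n r j i) * X ^ (i - j) := by
  set c : ℕ → ℝ := fun j => (a j).coeff 0 / kcoef n r j j with hcdef
  refine ⟨c, ?_⟩
  intro i hi
  rw [← sub_eq_zero]
  apply Polynomial.ext
  intro d
  rw [Polynomial.coeff_sub, Polynomial.coeff_zero]
  set t : ℤ := (i : ℤ) - d with htdef
  have hti : t ≤ (i : ℤ) := by omega
  have htr : t ≤ (r : ℤ) := by omega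
  set u : ℕ → ℝ := fun i' => wcoef a t i' -
    (if 0 ≤ t then c t.toNat * kcoef n r t.toNat i' else 0) with hudef
  have hu : ∀ i', i' ≤ r → u i' = 0 := by
    apply vandermonde_zero n r hrn t u
    · -- h1
      intro i' hi' hit
      rw [hudef]
      simp only
      rcases lt_or_eq_of_le hit with hlt | heq
      · rw [wcoef, if_neg (by omega)]
        split_ifs with h0
        · rw [kcoef_eq_zero_left n r t.toNat i' (by omega)]
          ring
        · ring
      · have h0 : 0 ≤ t := by omega
        have hteq : t.toNat = i' := by omega
        rw [if_pos h0, hteq, wcoef, if_pos heq.ge]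
        have : ((i' : ℤ) - t).toNat = 0 := by omega
        rw [this, hcdef]
        have hk : kcoef n r i' i' ≠ 0 := (kcoef_diag_pos n r i' hi' hrn).ne'
        field_simp
        ring
    · -- h2
      intro m hm hlt
      rw [hudef]
      simp only [mul_sub]
      rw [Finset.sum_sub_distrib]
      rw [map_cond_coeff n r a H t m hm hlt]
      rw [zero_sub, neg_eq_zero]
      split_ifs with h0
      · have : ∑ i' ∈ Finset.range (r+1), (m.descFactorial i' : ℝ)
            * (c t.toNat * kcoef n r t.toNat i')
            = c t.toNat * ∑ i' ∈ Finset.range (r+1),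
              (m.descFactorial i' : ℝ) * kcoef n r t.toNat i' := by
          rw [Finset.mul_sum]
          apply Finset.sum_congr rfl
          intro i' _
          ring
        rw [this, kcoef_sum_vanish n r t.toNat m (by omega) hm (by omega), mul_zero]
      · simp
  have hcoeffa : (a i).coeff d = wcoef a t i := by
    rw [wcoef, if_pos hti]
    congr 1
    omega
  have hcoeffK : (∑ j ∈ Finset.range (r+1), C (c j * kcoef n r j i) * X ^ (i - j)).coeff d
      = (if 0 ≤ t then c t.toNat * kcoef n r t.toNat i else 0) := by
    rw [Kpart_coeff n r c i d hi]
    rcases le_or_gt d i with hd | hd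
    · rw [if_pos hd, if_pos (by omega)]
      congr 2 <;> omega
    · rw [if_neg (by omega), if_neg (by omega)]
  rw [hcoeffa, hcoeffK]
  exact hu i hi

lemma comb_apply (n r : ℕ) (c : ℕ → ℝ) (f : ℝ[X]) :
    ∑ j ∈ Finset.range (r+1), c j • Kop n r j f
      = ∑ i ∈ Finset.range (r+1),
          (∑ j ∈ Finset.range (r+1), C (c j * kcoef n r j i) * X ^ (i - j)) * derivative^[i] f := by
  have h1 : ∀ j ∈ Finset.range (r+1), c j • Kop n r j f
      = ∑ i ∈ Finset.range (r+1), (C (c j * kcoef n r j i) * X ^ (i - j)) * derivative^[i] f := by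
    intro j hj
    rw [Finset.mem_range] at hj
    rw [Kop_structure n r j (by omega) f, Finset.smul_sum]
    apply Finset.sum_congr rfl
    intro i _
    rw [smul_smul, smul_eq_C_mul]
    ring
  rw [Finset.sum_congr rfl h1, Finset.sum_comm]
  apply Finset.sum_congr rfl
  intro i _
  rw [Finset.sum_mul]

lemma Kop_linearIndependent (n r : ℕ) (hrn : r ≤ n) :
    LinearIndependent ℝ (fun j : Fin (r + 1) => Kop n r (j : ℕ)) := by
  rw [Fintype.linearIndependent_iff]
  intro g hg j
  have happ : ∑ j' : Fin (r+1), g j' • (Kop n r (j' : ℕ) (X ^ (n + r) : ℝ[X])) = 0 := by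
    have := congrArg (fun L : ℝ[X] →ₗ[ℝ] ℝ[X] => L (X ^ (n + r) : ℝ[X])) hg
    simpa [LinearMap.sum_apply, LinearMap.smul_apply] using this
  have hc := congrArg (fun q : ℝ[X] => q.coeff (n + r - (j : ℕ))) happ
  simp only [Polynomial.finset_sum_coeff, Polynomial.coeff_zero] at hc
  rw [Finset.sum_eq_single j] at hc
  · rw [Kop_X_pow, Polynomial.coeff_smul, Polynomial.coeff_smul, Polynomial.coeff_X_pow,
      if_pos rfl, smul_eq_mul, smul_eq_mul, mul_one] at hc
    have hj := j.isLt
    have hne := Kop_scalar_ne_zero n r (j : ℕ) (by omega)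
    rcases mul_eq_zero.mp hc with h | h
    · exact h
    · exact absurd h hne
  · intro b _ hbj
    rw [Kop_X_pow, Polynomial.coeff_smul, Polynomial.coeff_smul, Polynomial.coeff_X_pow]
    have hb := b.isLt
    have hj := j.isLt
    rw [if_neg (by intro hcon; apply hbj; apply Fin.ext; omega)]
    simp
  · intro hnj
    exact absurd (Finset.mem_univ j) hnj


/-- For `r ≤ n`: the operators `K_{r0}, …, K_{rr}` are linearly
independent, each maps `P_n` into `P_{n−r}`, every operator with polynomial coefficients
of order at most `r` mapping `P_n` into `P_{n−r}` is a unique constant-coefficient linear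
combination of them, and the space of such operators has dimension `r + 1`. -/
theorem Kop_basis_maximal_deficiency (n r : ℕ) (hrn : r ≤ n) :
    LinearIndependent ℝ (fun j : Fin (r + 1) => Kop n r (j : ℕ)) ∧
    (∀ j ≤ r, ∀ f ∈ degreeLE ℝ (n : WithBot ℕ),
      Kop n r j f ∈ degreeLE ℝ ((n - r : ℕ) : WithBot ℕ)) ∧
    (∀ a : ℕ → ℝ[X],
      (∀ f ∈ degreeLE ℝ (n : WithBot ℕ),
        (∑ i ∈ Finset.range (r + 1), a i * derivative^[i] f) ∈
          degreeLE ℝ ((n - r : ℕ) : WithBot ℕ)) →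
      ∃! c : Fin (r + 1) → ℝ, ∀ f : ℝ[X],
        (∑ i ∈ Finset.range (r + 1), a i * derivative^[i] f) =
          ∑ j : Fin (r + 1), c j • Kop n r (j : ℕ) f) ∧
    Module.finrank ℝ
      (Submodule.span ℝ (Set.range fun j : Fin (r + 1) => Kop n r (j : ℕ))) = r + 1 := by
  have hLI := Kop_linearIndependent n r hrn
  refine ⟨hLI, fun j hj f hf => Kop_maps n r j hj hrn f hf, ?_, ?_⟩
  · intro a H
    obtain ⟨c, hc⟩ := exists_comb n r hrn a H
    set cF : Fin (r + 1) → ℝ := fun j => c (j : ℕ) with hcFdef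
    have hcF : ∀ f : ℝ[X],
        (∑ i ∈ Finset.range (r + 1), a i * derivative^[i] f) =
          ∑ j : Fin (r + 1), cF j • Kop n r (j : ℕ) f := by
      intro f
      rw [hcFdef]
      rw [Fin.sum_univ_eq_sum_range (fun j => c j • Kop n r j f) (r+1)]
      rw [comb_apply n r c f]
      apply Finset.sum_congr rfl
      intro i hi
      rw [Finset.mem_range] at hi
      rw [← hc i (by omega)]
    refine ⟨cF, hcF, ?_⟩
    intro c' hc'
    have hzero : ∀ f : ℝ[X], ∑ j : Fin (r + 1), (c' j - cF j) • Kop n r (j : ℕ) f = 0 := by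
      intro f
      have h1 := hc' f
      have h2 := hcF f
      calc ∑ j : Fin (r + 1), (c' j - cF j) • Kop n r (j : ℕ) f
          = ∑ j : Fin (r + 1), c' j • Kop n r (j : ℕ) f
            - ∑ j : Fin (r + 1), cF j • Kop n r (j : ℕ) f := by
            rw [← Finset.sum_sub_distrib]
            apply Finset.sum_congr rfl
            intro j _
            rw [sub_smul]
        _ = 0 := by rw [← h1, ← h2, sub_self]
    have hmap : ∑ j : Fin (r + 1), (c' j - cF j) • Kop n r (j : ℕ) = 0 := by
      apply LinearMap.ext
      intro f
      have := hzero f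
      simpa [LinearMap.sum_apply, LinearMap.smul_apply] using this
    funext j
    have := Fintype.linearIndependent_iff.mp hLI (fun j => c' j - cF j) hmap j
    linarith [this]
  · rw [finrank_span_eq_card hLI, Fintype.card_fin]
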